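/- arXiv:1606.07489 — 2 statements merged into one kernel-verified Lean document; each statement's English description precedes it below -/
import Mathlib

section
/- Two countable structures A and B are infinitarily bi-interpretable if and only if there is a Baire-measurable group isomorphism between Aut(A) and Aut(B). Furthermore, every continuous isomorphism from Aut(B) onto Aut(A) is of the form G_I for some interpretation I of A in B which is part of an infinitary bi-interpretation of A and B. -/
/-!
An interpretation `I` of `A` in `B` induces a continuous homomorphism
`G_I : Aut(B) → Aut(A)`, `g ↦ (f(l) ↦ f(g l))`, and for a bi-interpretation `G_I` and `G_J` are
mutually inverse. Conversely, a Baire-measurable homomorphism into `S_∞` is continuous: the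
preimage of a point stabiliser is a Baire-measurable subgroup of countable index, hence
non-meagre, hence open by Pettis' lemma. By Lusin–Souslin the inverse of a continuous isomorphism
between the Polish groups `Aut(B)` and `Aut(A)` is Borel, so it is continuous as well. Finally a
continuous `K : Aut(B) → Aut(A)` is `G_I` for the interpretation coding `a ∈ A` by the orbit of a
tuple `(0, …, N - 1)` of `B` whose pointwise stabiliser `K` maps into the stabiliser of `a`.
-/

namespace Paper

/-- A structure in a (countable) relational language with arity function `L`,
with domain `ω`.  `rel i` is the interpretation of the `i`-th relation symbol,
of arity `L i`. -/
structure Str (L : ℕ → ℕ) where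
  rel : ∀ i, (Fin (L i) → ℕ) → Bool

/-- `g` is an isomorphism from `M` to `N`. -/
def IsIso {L : ℕ → ℕ} (M N : Str L) (g : ℕ ≃ ℕ) : Prop :=
  ∀ i (v : Fin (L i) → ℕ), M.rel i v = N.rel i fun k => g (v k)

theorem isIso_refl {L : ℕ → ℕ} (M : Str L) : IsIso M M (Equiv.refl ℕ) := fun _ _ => rfl

/-- The automorphism group of `M`, as a subgroup of `S_∞ = Equiv.Perm ℕ`. -/
def aut {L : ℕ → ℕ} (M : Str L) : Subgroup (Equiv.Perm ℕ) where
  carrier := {g | IsIso M M g}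
  one_mem' := isIso_refl M
  mul_mem' := by
    intro a b ha hb i v
    exact (hb i v).trans (ha i fun k => b (v k))
  inv_mem' := by
    intro a ha i v
    have h := ha i fun k => a⁻¹ (v k)
    simpa using h.symm

theorem mem_aut {L : ℕ → ℕ} {M : Str L} {g : Equiv.Perm ℕ} (h : g ∈ aut M) : IsIso M M g := h

/-- The topology of pointwise convergence on `S_∞ = Equiv.Perm ℕ`, i.e. the topology
induced from Baire space `ω^ω`; automorphism groups of countable structures carry the
subspace topology. -/
instance : TopologicalSpace (Equiv.Perm ℕ) :=
  TopologicalSpace.induced (fun g => (g : ℕ → ℕ)) inferInstance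

end Paper
namespace Paper

/-- An infinitary interpretation of `A` in `B` (Definition 1.1 of the paper).
The domain `Dom ⊆ B^{<ω}`, the equivalence relation `eqv` and the relations `R i`
are required to be `L_{ω₁ω}`-definable without parameters in `B`; for countable
structures this is equivalent to invariance under all automorphisms of `B`
(acting coordinatewise on tuples), which is how definability is rendered here.
`F` is the map `f^B_A : Dom → A` inducing an isomorphism
`(Dom/∼; R₀/∼, R₁/∼, …) ≅ (A; P₀^A, P₁^A, …)`. -/
structure Interp {LA LB : ℕ → ℕ} (A : Str LA) (B : Str LB) where
  Dom : Set (List ℕ)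
  eqv : List ℕ → List ℕ → Prop
  R : ∀ i, (Fin (LA i) → List ℕ) → Prop
  F : List ℕ → ℕ
  dom_inv : ∀ g ∈ aut B, ∀ l ∈ Dom, List.map (⇑g) l ∈ Dom
  eqv_inv : ∀ g ∈ aut B, ∀ l₁ ∈ Dom, ∀ l₂ ∈ Dom,
    eqv l₁ l₂ → eqv (List.map (⇑g) l₁) (List.map (⇑g) l₂)
  R_inv : ∀ i, ∀ g ∈ aut B, ∀ v : Fin (LA i) → List ℕ,
    (∀ k, v k ∈ Dom) → R i v → R i fun k => List.map (⇑g) (v k)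
  eqv_refl : ∀ l ∈ Dom, eqv l l
  eqv_symm : ∀ l₁ ∈ Dom, ∀ l₂ ∈ Dom, eqv l₁ l₂ → eqv l₂ l₁
  eqv_trans : ∀ l₁ ∈ Dom, ∀ l₂ ∈ Dom, ∀ l₃ ∈ Dom, eqv l₁ l₂ → eqv l₂ l₃ → eqv l₁ l₃
  R_resp : ∀ i, ∀ v w : Fin (LA i) → List ℕ, (∀ k, v k ∈ Dom) → (∀ k, w k ∈ Dom) →
    (∀ k, eqv (v k) (w k)) → R i v → R i w
  F_surj : ∀ a : ℕ, ∃ l ∈ Dom, F l = a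
  F_eqv : ∀ l₁ ∈ Dom, ∀ l₂ ∈ Dom, (F l₁ = F l₂ ↔ eqv l₁ l₂)
  F_rel : ∀ i, ∀ v : Fin (LA i) → List ℕ, (∀ k, v k ∈ Dom) →
    (R i v ↔ A.rel i (fun k => F (v k)) = true)

end Paper
namespace Paper

/-- An infinitary bi-interpretation of `A` and `B` (Definition 1.6 of the paper):
interpretations of each structure in the other such that the composite maps
`f^A_B ∘ f̃^B_A : Dom_B^{(Dom_A^B)} → B` and `f^B_A ∘ f̃^A_B : Dom_A^{(Dom_B^A)} → A`
are `L_{ω₁ω}`-definable in `B` and in `A` respectively; definability is rendered as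
invariance of the graph under all automorphisms. -/
structure BiInterp {LA LB : ℕ → ℕ} (A : Str LA) (B : Str LB) where
  I : Interp A B
  J : Interp B A
  comp_def_B : ∀ g ∈ aut B, ∀ LL : List (List ℕ), (∀ l ∈ LL, l ∈ I.Dom) →
    List.map I.F LL ∈ J.Dom →
    J.F (List.map I.F (List.map (List.map (⇑g)) LL)) = g (J.F (List.map I.F LL))
  comp_def_A : ∀ g ∈ aut A, ∀ LL : List (List ℕ), (∀ l ∈ LL, l ∈ J.Dom) →
    List.map J.F LL ∈ I.Dom →
    I.F (List.map J.F (List.map (List.map (⇑g)) LL)) = g (I.F (List.map J.F LL))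

end Paper
namespace Paper

/-- A map between topological spaces is Baire-measurable if preimages of open sets
have the Baire property. -/
def BaireMeasurableFun {α β : Type*} [TopologicalSpace α] [TopologicalSpace β]
    (f : α → β) : Prop :=
  ∀ s : Set β, IsOpen s → BaireMeasurableSet (f ⁻¹' s)

end Paper

open Topology Filter Set

section Pettis

variable {G : Type*} [Group G] [TopologicalSpace G] [IsTopologicalGroup G] [BaireSpace G]

/-- Pettis' lemma, for subgroups. -/
theorem Subgroup.isOpen_of_baireMeasurableSet_of_not_isMeagre (H : Subgroup G)
    (hBM : BaireMeasurableSet (H : Set G)) (hH : ¬IsMeagre (H : Set G)) : IsOpen (H : Set G) := by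
  obtain ⟨U, hU, hHU⟩ := hBM.residualEq_isOpen
  rw [eventuallyEq_set] at hHU
  obtain ⟨u, hu⟩ : U.Nonempty := by
    rw [nonempty_iff_ne_empty]
    rintro rfl
    exact hH (hHU.mono fun x hx => by simpa using hx)
  refine H.isOpen_of_mem_nhds (g := 1) <| mem_of_superset
    ((hU.preimage (continuous_mul_const u)).mem_nhds (by simpa using hu)) fun g hg => ?_
  -- `U ∩ g⁻¹U` is a nonempty open set, so it meets the residual set where both `x` and `g * x`
  -- lie in `H` exactly when they lie in `U`.
  have hres : ∀ᶠ x in residual G, (x ∈ H ↔ x ∈ U) ∧ (g * x ∈ H ↔ g * x ∈ U) :=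
    hHU.and <| (tendsto_residual_of_isOpenMap (continuous_const_mul g)
      (isOpenMap_mul_left g)).eventually hHU
  obtain ⟨x, ⟨hxU, hgxU⟩, hx, hgx⟩ := (dense_of_mem_residual hres).inter_open_nonempty _
    (hU.inter (hU.preimage (continuous_const_mul g))) ⟨u, hu, hg⟩
  simpa using H.mul_mem (hgx.2 hgxU) (H.inv_mem (hx.2 hxU))

theorem Subgroup.not_isMeagre_of_countable_quotient (H : Subgroup G) [Countable (G ⧸ H)] :
    ¬IsMeagre (H : Set G) := by
  intro hH
  have hcoset (q : G ⧸ H) : IsMeagre ((QuotientGroup.mk : G → G ⧸ H) ⁻¹' {q}) := by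
    induction q using QuotientGroup.induction_on with | H g => ?_
    have hpre : (QuotientGroup.mk : G → G ⧸ H) ⁻¹' {(g : G ⧸ H)} = (g⁻¹ * ·) ⁻¹' H := by
      ext x
      simp [QuotientGroup.eq, eq_comm]
    rw [hpre]
    exact hH.preimage_of_isOpenMap (continuous_const_mul _) (isOpenMap_mul_left _)
  have hmeagre := isMeagre_iUnion hcoset
  rw [← preimage_iUnion, iUnion_of_singleton, preimage_univ] at hmeagre
  exact not_isMeagre_of_isOpen isOpen_univ univ_nonempty hmeagre

theorem MulAction.isOpen_stabilizer_of_baireMeasurableSet {X : Type*} [MulAction G X]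
    [Countable X] (x : X) (hBM : BaireMeasurableSet (MulAction.stabilizer G x : Set G)) :
    IsOpen (MulAction.stabilizer G x : Set G) :=
  haveI : Countable (G ⧸ stabilizer G x) :=
    (orbitEquivQuotientStabilizer G x).symm.injective.countable
  (stabilizer G x).isOpen_of_baireMeasurableSet_of_not_isMeagre hBM
    (stabilizer G x).not_isMeagre_of_countable_quotient

end Pettis

namespace Paper

theorem isEmbedding_permCoe : IsEmbedding fun g : Equiv.Perm ℕ => (g : ℕ → ℕ) :=
  ⟨⟨rfl⟩, DFunLike.coe_injective⟩

theorem continuous_permCoe : Continuous fun g : Equiv.Perm ℕ => (g : ℕ → ℕ) :=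
  continuous_induced_dom

theorem continuous_fst_comp_snd_apply (m : ℕ) :
    Continuous fun p : (ℕ → ℕ) × (ℕ → ℕ) => p.1 (p.2 m) := by
  refine continuous_iff_continuousAt.2 fun p => ?_
  have hlocal : ∀ᶠ q in 𝓝 p, q.2 m = p.2 m :=
    ((continuous_apply m).comp continuous_snd).continuousAt.eventually_mem
      ((isOpen_discrete {p.2 m}).mem_nhds rfl)
  exact ((continuous_apply (p.2 m)).comp continuous_fst).continuousAt.congr
    (hlocal.mono fun q hq => by simp only [Function.comp_apply, hq])

instance : IsTopologicalGroup (Equiv.Perm ℕ) where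
  continuous_mul := continuous_induced_rng.2 <| continuous_pi fun x =>
    (continuous_fst_comp_snd_apply x).comp (continuous_permCoe.prodMap continuous_permCoe)
  continuous_inv := continuous_induced_rng.2 <| continuous_pi fun x =>
    continuous_discrete_rng.2 fun y => by
      have hfib : (fun g : Equiv.Perm ℕ => g⁻¹ x) ⁻¹' {y} =
          (fun g : Equiv.Perm ℕ => g y) ⁻¹' {x} := by
        ext g
        simp [Equiv.eq_symm_apply, eq_comm]
      exact hfib ▸ (isOpen_discrete _).preimage ((continuous_apply y).comp continuous_permCoe)

section Aut

variable {L : ℕ → ℕ} (M : Str L)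

theorem isInducing_autCoe : IsInducing fun g : aut M => ((g : Equiv.Perm ℕ) : ℕ → ℕ) :=
  isEmbedding_permCoe.isInducing.comp IsInducing.subtypeVal

/-- Unlike `g ↦ g`, this embedding into `ω^ω × ω^ω` has closed range. -/
def autPairEmbedding (g : aut M) : (ℕ → ℕ) × (ℕ → ℕ) :=
  ((g : Equiv.Perm ℕ), ((g⁻¹ : aut M) : Equiv.Perm ℕ))

theorem range_autPairEmbedding : range (autPairEmbedding M) =
    {p | (∀ m, p.1 (p.2 m) = m) ∧ (∀ m, p.2 (p.1 m) = m) ∧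
      ∀ i (v : Fin (L i) → ℕ), M.rel i (fun k => p.1 (v k)) = M.rel i v} := by
  ext p
  constructor
  · rintro ⟨g, rfl⟩
    exact ⟨(g : Equiv.Perm ℕ).apply_symm_apply, (g : Equiv.Perm ℕ).symm_apply_apply,
      fun i v => (mem_aut g.2 i v).symm⟩
  · rintro ⟨h₁, h₂, hrel⟩
    exact ⟨⟨⟨p.1, p.2, h₂, h₁⟩, fun i v => (hrel i v).symm⟩, rfl⟩

theorem isClosedEmbedding_autPairEmbedding : IsClosedEmbedding (autPairEmbedding M) := by
  have hcont : Continuous (autPairEmbedding M) :=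
    (isInducing_autCoe M).continuous.prodMk ((isInducing_autCoe M).continuous.comp continuous_inv)
  refine ⟨⟨(isInducing_autCoe M).of_comp hcont continuous_fst,
    fun g h hgh => Subtype.ext (DFunLike.coe_injective (congrArg Prod.fst hgh))⟩, ?_⟩
  have hrel : ∀ i (v : Fin (L i) → ℕ),
      Continuous fun p : (ℕ → ℕ) × (ℕ → ℕ) => M.rel i fun k => p.1 (v k) := fun i v =>
    continuous_of_discreteTopology.comp <|
      continuous_pi fun k => (continuous_apply (v k)).comp continuous_fst
  simp only [range_autPairEmbedding, ofPred_and, ofPred_forall]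
  have hcomp := continuous_fst_comp_snd_apply
  refine (isClosed_iInter fun m => isClosed_eq (hcomp m) continuous_const).inter <|
    (isClosed_iInter fun m => isClosed_eq ((hcomp m).comp continuous_swap) continuous_const).inter ?_
  exact isClosed_iInter fun i => isClosed_iInter fun v => isClosed_eq (hrel i v) continuous_const

instance : PolishSpace (aut M) := (isClosedEmbedding_autPairEmbedding M).polishSpace

end Aut

section AutomaticContinuity

variable {G : Type*} [Group G] [TopologicalSpace G] [IsTopologicalGroup G]

theorem continuous_of_eventually_apply_eq_self (ρ : G →* Equiv.Perm ℕ)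
    (h : ∀ b, ∀ᶠ g in 𝓝 1, ρ g b = b) : Continuous fun g => (ρ g : ℕ → ℕ) :=
  continuous_permCoe.comp <| continuous_of_continuousAt_one ρ <| by
    rw [ContinuousAt, map_one, isEmbedding_permCoe.isInducing.tendsto_nhds_iff, tendsto_pi_nhds]
    simpa [nhds_discrete] using h

theorem continuous_of_baireMeasurableFun [BaireSpace G] (ρ : G →* Equiv.Perm ℕ)
    (hρ : BaireMeasurableFun fun g => (ρ g : ℕ → ℕ)) : Continuous fun g => (ρ g : ℕ → ℕ) := by
  let := MulAction.compHom ℕ ρ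
  refine continuous_of_eventually_apply_eq_self ρ fun b => ?_
  have hBM : BaireMeasurableSet (MulAction.stabilizer G b : Set G) :=
    hρ {f | f b = b} ((isOpen_discrete {b}).preimage (continuous_apply (A := fun _ => ℕ) b))
  exact (MulAction.isOpen_stabilizer_of_baireMeasurableSet b hBM).mem_nhds
    (MulAction.stabilizer G b).one_mem

end AutomaticContinuity

theorem baireMeasurableFun_of_continuous {X Y : Type*} [TopologicalSpace X] [TopologicalSpace Y]
    {f : X → Y} (hf : Continuous f) : BaireMeasurableFun f :=
  fun _ hs => (hs.preimage hf).baireMeasurableSet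

/-- Lusin–Souslin: a continuous injection out of a Polish space maps Borel sets to Borel sets. -/
theorem baireMeasurableFun_comp_symm {X Y Z : Type*} [TopologicalSpace X] [PolishSpace X]
    [TopologicalSpace Y] [T2Space Y] [TopologicalSpace Z] (e : X ≃ Y) (he : Continuous e)
    {f : X → Z} (hf : Continuous f) : BaireMeasurableFun (f ∘ e.symm) := by
  intro s hs
  borelize X Y
  rw [preimage_comp, ← e.image_eq_preimage_symm]
  exact ((hs.preimage hf).measurableSet.image_of_continuousOn_injOn he.continuousOn
    e.injective.injOn).baireMeasurableSet

theorem continuous_symm_of_continuous {L₁ L₂ : ℕ → ℕ} {M : Str L₁} {N : Str L₂}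
    (E : aut M ≃* aut N) (hE : Continuous fun g => ((E g : Equiv.Perm ℕ) : ℕ → ℕ)) :
    Continuous fun g => ((E.symm g : Equiv.Perm ℕ) : ℕ → ℕ) :=
  continuous_of_baireMeasurableFun ((aut M).subtype.comp E.symm.toMonoidHom) <|
    baireMeasurableFun_comp_symm E.toEquiv ((isInducing_autCoe N).continuous_iff.2 hE)
      (isInducing_autCoe M).continuous

section Neighbourhoods

variable {L : ℕ → ℕ} {M : Str L}

theorem exists_fixing_subset_of_mem_nhds_one {S : Set (aut M)} (hS : S ∈ 𝓝 1) :
    ∃ n, ∀ g : aut M, (∀ x < n, (g : Equiv.Perm ℕ) x = x) → g ∈ S := by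
  rw [(isInducing_autCoe M).nhds_eq_comap] at hS
  obtain ⟨t, ht, hts⟩ := hS
  obtain ⟨_, ⟨y, n, rfl⟩, hy, hsub⟩ := (PiNat.isTopologicalBasis_cylinders _).mem_nhds_iff.1 ht
  exact ⟨n, fun g hg => hts (hsub (PiNat.mem_cylinder_iff_eq.1 hy ▸ PiNat.mem_cylinder_iff.2 hg))⟩

theorem eventually_apply_eq_self (x : ℕ) : ∀ᶠ g : aut M in 𝓝 1, (g : Equiv.Perm ℕ) x = x :=
  (isOpen_discrete {x}).preimage ((continuous_apply x).comp (isInducing_autCoe M).continuous)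
    |>.mem_nhds rfl

end Neighbourhoods

section OfContinuous

variable {LA LB : ℕ → ℕ} {A : Str LA} {B : Str LB} (K : aut B →* aut A)

/-- Such `n` exist when `K` is continuous; otherwise this is the junk value `sInf ∅ = 0`. -/
noncomputable def fixingBound (a : ℕ) : ℕ :=
  sInf {n | ∀ g : aut B, (∀ x < n, (g : Equiv.Perm ℕ) x = x) → (K g : Equiv.Perm ℕ) a = a}

theorem apply_eq_self_of_forall_lt_fixingBound
    (hK : Continuous fun g => ((K g : Equiv.Perm ℕ) : ℕ → ℕ)) {a : ℕ} {g : aut B}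
    (hg : ∀ x < fixingBound K a, (g : Equiv.Perm ℕ) x = x) : (K g : Equiv.Perm ℕ) a = a :=
  Nat.sInf_mem (exists_fixing_subset_of_mem_nhds_one <|
    (isOpen_discrete {a}).preimage ((continuous_apply a).comp hK) |>.mem_nhds (by simp)) g hg

/-- Pairing with `a` makes the length `codeLength K a` determine `a`. -/
noncomputable def codeLength (a : ℕ) : ℕ :=
  Nat.pair a (fixingBound K a)

theorem apply_eq_of_forall_lt_codeLength (hK : Continuous fun g => ((K g : Equiv.Perm ℕ) : ℕ → ℕ))
    {a : ℕ} {g g' : aut B}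
    (h : ∀ x < codeLength K a, (g : Equiv.Perm ℕ) x = (g' : Equiv.Perm ℕ) x) :
    (K g : Equiv.Perm ℕ) a = (K g' : Equiv.Perm ℕ) a := by
  have hfix : (K (g⁻¹ * g') : Equiv.Perm ℕ) a = a :=
    apply_eq_self_of_forall_lt_fixingBound K hK fun x hx => by
      simp [← h x (hx.trans_le (Nat.right_le_pair _ _))]
  calc (K g : Equiv.Perm ℕ) a = (K g : Equiv.Perm ℕ) ((K (g⁻¹ * g') : Equiv.Perm ℕ) a) := by
        rw [hfix]
    _ = (K g' : Equiv.Perm ℕ) a := by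
        rw [← Equiv.Perm.mul_apply, ← Subgroup.coe_mul, ← map_mul, mul_inv_cancel_left]

/-- `a ∈ A` is coded by the `Aut(B)`-orbit of the tuple `(0, 1, …, codeLength K a - 1)`. -/
noncomputable def codeOrbit (p : ℕ × aut B) : List ℕ :=
  (List.range (codeLength K p.1)).map (p.2 : Equiv.Perm ℕ)

noncomputable def codeValue : List ℕ → ℕ :=
  Function.extend (codeOrbit K) (fun p => (K p.2 : Equiv.Perm ℕ) p.1) fun _ => 0

theorem codeValue_codeOrbit (hK : Continuous fun g => ((K g : Equiv.Perm ℕ) : ℕ → ℕ))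
    (p : ℕ × aut B) :
    codeValue K (codeOrbit K p) = (K p.2 : Equiv.Perm ℕ) p.1 := by
  refine Function.FactorsThrough.extend_apply ?_ _ p
  rintro ⟨a, g⟩ ⟨a', g'⟩ h
  have hlen : codeLength K a = codeLength K a' := by
    simpa [codeOrbit] using congrArg List.length h
  obtain rfl : a = a' := (Nat.pair_eq_pair.1 hlen).1
  exact apply_eq_of_forall_lt_codeLength K hK fun x hx =>
    List.map_inj_left.1 h x (List.mem_range.2 hx)

theorem codeValue_map (hK : Continuous fun g => ((K g : Equiv.Perm ℕ) : ℕ → ℕ)) (g : aut B)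
    {l : List ℕ} (hl : l ∈ range (codeOrbit K)) :
    codeValue K (l.map (g : Equiv.Perm ℕ)) = (K g : Equiv.Perm ℕ) (codeValue K l) := by
  obtain ⟨⟨a, g₀⟩, rfl⟩ := hl
  have horbit : (codeOrbit K (a, g₀)).map (g : Equiv.Perm ℕ) = codeOrbit K (a, g * g₀) := by
    simp only [codeOrbit, List.map_map]
    rfl
  rw [horbit, codeValue_codeOrbit K hK, codeValue_codeOrbit K hK, map_mul]
  rfl

/-- The interpretation of `A` in `B` whose induced homomorphism `G_I` is `K`. -/
noncomputable def Interp.ofContinuous (hK : Continuous fun g => ((K g : Equiv.Perm ℕ) : ℕ → ℕ)) :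
    Interp A B where
  Dom := range (codeOrbit K)
  eqv l₁ l₂ := codeValue K l₁ = codeValue K l₂
  R i v := A.rel i (fun k => codeValue K (v k)) = true
  F := codeValue K
  dom_inv g hg := by
    rintro _ ⟨⟨a, g₀⟩, rfl⟩
    exact ⟨(a, ⟨g, hg⟩ * g₀), by simp only [codeOrbit, List.map_map]; rfl⟩
  eqv_inv g hg l₁ h₁ l₂ h₂ he := by
    simp only [codeValue_map K hK ⟨g, hg⟩ h₁, codeValue_map K hK ⟨g, hg⟩ h₂, he]
  R_inv i g hg v hv hR := by
    simp only [codeValue_map K hK ⟨g, hg⟩ (hv _)]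
    rwa [← mem_aut (K ⟨g, hg⟩).2]
  eqv_refl _ _ := rfl
  eqv_symm _ _ _ _ h := h.symm
  eqv_trans _ _ _ _ _ _ h₁ h₂ := h₁.trans h₂
  R_resp i v w _ _ he hR := by
    simpa only [← he]
  F_surj a := ⟨codeOrbit K (a, 1), mem_range_self _, by simp [codeValue_codeOrbit K hK]⟩
  F_eqv _ _ _ _ := Iff.rfl
  F_rel _ _ _ := Iff.rfl

end OfContinuous

theorem codeValue_map_codeValue {LA LB : ℕ → ℕ} {A : Str LA} {B : Str LB}
    (K : aut B →* aut A) (hK : Continuous fun g => ((K g : Equiv.Perm ℕ) : ℕ → ℕ))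
    (K' : aut A →* aut B) (hK' : Continuous fun g => ((K' g : Equiv.Perm ℕ) : ℕ → ℕ))
    (hKK' : ∀ g, K' (K g) = g) (g : aut B) {LL : List (List ℕ)}
    (hLL : ∀ l ∈ LL, l ∈ range (codeOrbit K)) (hLL' : LL.map (codeValue K) ∈ range (codeOrbit K')) :
    codeValue K' ((LL.map (List.map (g : Equiv.Perm ℕ))).map (codeValue K)) =
      (g : Equiv.Perm ℕ) (codeValue K' (LL.map (codeValue K))) := by
  have hmap : (LL.map (List.map (g : Equiv.Perm ℕ))).map (codeValue K) =
      (LL.map (codeValue K)).map (K g : Equiv.Perm ℕ) := by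
    simp only [List.map_map]
    exact List.map_congr_left fun l hl => codeValue_map K hK g (hLL l hl)
  rw [hmap, codeValue_map K' hK' (K g) hLL', hKK']

noncomputable def BiInterp.ofMulEquiv {LA LB : ℕ → ℕ} {A : Str LA} {B : Str LB}
    (E : aut B ≃* aut A) (hE : Continuous fun g => ((E g : Equiv.Perm ℕ) : ℕ → ℕ))
    (hE' : Continuous fun g => ((E.symm g : Equiv.Perm ℕ) : ℕ → ℕ)) : BiInterp A B where
  I := Interp.ofContinuous E.toMonoidHom hE
  J := Interp.ofContinuous E.symm.toMonoidHom hE'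
  comp_def_B g hg _ hLL hLL' :=
    codeValue_map_codeValue E.toMonoidHom hE E.symm.toMonoidHom hE' E.symm_apply_apply ⟨g, hg⟩
      hLL hLL'
  comp_def_A g hg _ hLL hLL' :=
    codeValue_map_codeValue E.symm.toMonoidHom hE' E.toMonoidHom hE E.apply_symm_apply ⟨g, hg⟩
      hLL hLL'

namespace Interp

variable {LA LB : ℕ → ℕ} {A : Str LA} {B : Str LB} (I : Interp A B)

noncomputable def rep (a : ℕ) : List ℕ := (I.F_surj a).choose

theorem rep_mem (a : ℕ) : I.rep a ∈ I.Dom := (I.F_surj a).choose_spec.1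

theorem F_rep (a : ℕ) : I.F (I.rep a) = a := (I.F_surj a).choose_spec.2

noncomputable def inducedFun (g : aut B) (a : ℕ) : ℕ := I.F ((I.rep a).map (g : Equiv.Perm ℕ))

theorem inducedFun_F (g : aut B) {l : List ℕ} (hl : l ∈ I.Dom) :
    I.inducedFun g (I.F l) = I.F (l.map (g : Equiv.Perm ℕ)) := by
  have hrep := I.rep_mem (I.F l)
  refine (I.F_eqv _ (I.dom_inv _ g.2 _ hrep) _ (I.dom_inv _ g.2 _ hl)).2 <|
    I.eqv_inv _ g.2 _ hrep _ hl <| (I.F_eqv _ hrep _ hl).1 (I.F_rep _)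

theorem inducedFun_one (a : ℕ) : I.inducedFun 1 a = a := by
  simp [inducedFun, F_rep]

theorem inducedFun_mul (g h : aut B) (a : ℕ) :
    I.inducedFun (g * h) a = I.inducedFun g (I.inducedFun h a) := by
  rw [show I.inducedFun h a = I.F ((I.rep a).map (h : Equiv.Perm ℕ)) from rfl,
    inducedFun_F _ _ (I.dom_inv _ h.2 _ (I.rep_mem a)), inducedFun, List.map_map]
  rfl

noncomputable def inducedPerm (g : aut B) : Equiv.Perm ℕ where
  toFun := I.inducedFun g
  invFun := I.inducedFun g⁻¹
  left_inv a := by rw [← inducedFun_mul, inv_mul_cancel, inducedFun_one]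
  right_inv a := by rw [← inducedFun_mul, mul_inv_cancel, inducedFun_one]

theorem R_map_iff (g : aut B) {i : ℕ} {v : Fin (LA i) → List ℕ} (hv : ∀ k, v k ∈ I.Dom) :
    I.R i (fun k => (v k).map (g : Equiv.Perm ℕ)) ↔ I.R i v := by
  refine ⟨fun h => ?_, I.R_inv i _ g.2 v hv⟩
  simpa [List.map_map] using I.R_inv i _ g⁻¹.2 _ (fun k => I.dom_inv _ g.2 _ (hv k)) h

theorem inducedPerm_mem (g : aut B) : I.inducedPerm g ∈ aut A := by
  intro i v
  have hrep : ∀ k, I.rep (v k) ∈ I.Dom := fun k => I.rep_mem (v k)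
  have hrel := (I.F_rel i _ fun k => I.dom_inv _ g.2 _ (hrep k)).symm.trans
    ((I.R_map_iff g hrep).trans (I.F_rel i _ hrep))
  simp only [F_rep] at hrel
  exact Bool.coe_iff_coe.1 hrel.symm

/-- The homomorphism `G_I : Aut(B) → Aut(A)`. -/
noncomputable def autHom : aut B →* aut A :=
  MonoidHom.mk' (fun g => ⟨I.inducedPerm g, I.inducedPerm_mem g⟩) fun g h =>
    Subtype.ext <| Equiv.ext <| I.inducedFun_mul g h

theorem autHom_apply (g : aut B) (a : ℕ) :
    (I.autHom g : Equiv.Perm ℕ) a = I.F ((I.rep a).map (g : Equiv.Perm ℕ)) := rfl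

theorem continuous_autHom : Continuous fun g => ((I.autHom g : Equiv.Perm ℕ) : ℕ → ℕ) :=
  continuous_of_eventually_apply_eq_self ((aut A).subtype.comp I.autHom) fun a => by
    filter_upwards [(I.rep a).finite_toSet.eventually_all.2 fun x _ => eventually_apply_eq_self x]
      with g hg
    simp only [MonoidHom.comp_apply, Subgroup.subtype_apply, autHom_apply]
    rw [List.map_congr_left hg, List.map_id', F_rep]

end Interp

namespace BiInterp

variable {LA LB : ℕ → ℕ} {A : Str LA} {B : Str LB}

def symm (bi : BiInterp A B) : BiInterp B A := ⟨bi.J, bi.I, bi.comp_def_A, bi.comp_def_B⟩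

theorem autHom_J_autHom_I (bi : BiInterp A B) (g : aut B) : bi.J.autHom (bi.I.autHom g) = g := by
  refine Subtype.ext <| Equiv.ext fun b => ?_
  -- Apply the definability of `f^A_B ∘ f̃^B_A` to a representative of a representative of `b`.
  set LL := (bi.J.rep b).map bi.I.rep
  have hLL : ∀ l ∈ LL, l ∈ bi.I.Dom := by
    simp only [LL, List.mem_map]
    rintro _ ⟨a, -, rfl⟩
    exact bi.I.rep_mem a
  have hF : LL.map bi.I.F = bi.J.rep b := by
    simp [LL, List.map_map, Function.comp_def, Interp.F_rep]
  have hcomp := bi.comp_def_B _ g.2 LL hLL (hF ▸ bi.J.rep_mem b)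
  rw [hF, bi.J.F_rep] at hcomp
  rw [← hcomp, Interp.autHom_apply]
  simp only [LL, List.map_map]
  rfl

theorem autHom_I_autHom_J (bi : BiInterp A B) (h : aut A) : bi.I.autHom (bi.J.autHom h) = h :=
  bi.symm.autHom_J_autHom_I h

noncomputable def autEquiv (bi : BiInterp A B) : aut A ≃* aut B where
  toFun := bi.J.autHom
  invFun := bi.I.autHom
  left_inv := bi.autHom_I_autHom_J
  right_inv := bi.autHom_J_autHom_I
  map_mul' := map_mul bi.J.autHom

end BiInterp

/-- **Theorem 1.7.** Two countable structures `A` and `B` are infinitarily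
bi-interpretable if and only if their automorphism groups are Baire-measurably
isomorphic.  Furthermore, every continuous isomorphism from `Aut(B)` onto `Aut(A)`
is of the form `G_I` for some infinitary interpretation `I` of `A` in `B` which is
part of an infinitary bi-interpretation of `A` and `B`. -/
theorem biinterpretable_iff_baire_iso (LA LB : ℕ → ℕ) (A : Str LA) (B : Str LB) :
    (Nonempty (BiInterp A B) ↔
      ∃ H : ↥(aut A) ≃* ↥(aut B),
        BaireMeasurableFun fun g : ↥(aut A) => ((H g : Equiv.Perm ℕ) : ℕ → ℕ)) ∧
    (∀ H : ↥(aut B) →* ↥(aut A), Function.Bijective H →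
      (Continuous fun g : ↥(aut B) => ((H g : Equiv.Perm ℕ) : ℕ → ℕ)) →
      ∃ bi : BiInterp A B, ∀ (g : ↥(aut B)), ∀ l ∈ bi.I.Dom,
        (H g : Equiv.Perm ℕ) (bi.I.F l) = bi.I.F (List.map (⇑(g : Equiv.Perm ℕ)) l)) := by
  refine ⟨⟨fun ⟨bi⟩ => ⟨bi.autEquiv, baireMeasurableFun_of_continuous bi.J.continuous_autHom⟩,
    fun ⟨H, hH⟩ => ?_⟩, fun H hH hcont => ?_⟩
  · have hcont : Continuous fun g => ((H g : Equiv.Perm ℕ) : ℕ → ℕ) :=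
      continuous_of_baireMeasurableFun ((aut B).subtype.comp H.toMonoidHom) hH
    exact ⟨BiInterp.ofMulEquiv H.symm (continuous_symm_of_continuous H hcont) hcont⟩
  · set E := MulEquiv.ofBijective H hH
    exact ⟨BiInterp.ofMulEquiv E hcont (continuous_symm_of_continuous E hcont),
      fun g l hl => (codeValue_map E.toMonoidHom hcont g hl).symm⟩

end Paper
end

section
/- Let A and B be countable structures. For every continuous group homomorphism H : Aut(B) → Aut(A), there is a Borel functor G : Iso(B) → Iso(A) with G(B) = A whose restriction to Aut(B) (the morphisms from B to itself) is H. -/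
namespace Paper

def Isomorphic {L : ℕ → ℕ} (M N : Str L) : Prop := ∃ g : ℕ ≃ ℕ, IsIso M N g

/-- The copies of `B`: structures with domain `ω` isomorphic to `B`.  These are the
objects of the category `Iso(B)`; the morphisms are the isomorphisms between copies. -/
abbrev Copy {L : ℕ → ℕ} (B : Str L) := {M : Str L // Isomorphic M B}

def selfCopy {L : ℕ → ℕ} (B : Str L) : Copy B := ⟨B, ⟨Equiv.refl ℕ, isIso_refl B⟩⟩

/-- A functor from `Iso(B)` to `Iso(A)`: it maps copies of `B` to copies of `A` and
isomorphisms between copies of `B` to isomorphisms between the corresponding copies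
of `A`, preserving identity and composition (Definition 1.8). -/
structure IsoFunctor {LB LA : ℕ → ℕ} (B : Str LB) (A : Str LA) where
  obj : Copy B → Copy A
  map : ∀ (M N : Copy B) (g : ℕ ≃ ℕ), IsIso M.1 N.1 g → (ℕ ≃ ℕ)
  map_iso : ∀ M N g hg, IsIso (obj M).1 (obj N).1 (map M N g hg)
  map_id : ∀ (M : Copy B) (h : IsIso M.1 M.1 (Equiv.refl ℕ)),
    map M M (Equiv.refl ℕ) h = Equiv.refl ℕ
  map_comp : ∀ (M N P : Copy B) (g₁ : ℕ ≃ ℕ) (h₁ : IsIso M.1 N.1 g₁)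
    (g₂ : ℕ ≃ ℕ) (h₂ : IsIso N.1 P.1 g₂) (h₃ : IsIso M.1 P.1 (g₁.trans g₂)),
    map M P (g₁.trans g₂) h₃ = (map M N g₁ h₁).trans (map N P g₂ h₂)

/-- Codes of structures with domain `ω` as elements of Cantor space. -/
abbrev ObjCode (L : ℕ → ℕ) := (Σ i : ℕ, (Fin (L i) → ℕ)) → Bool

def codeStr {L : ℕ → ℕ} (M : Str L) : ObjCode L := fun p => M.rel p.1 p.2

/-- A functor is Borel if its action on objects and its action on morphisms are
given by Borel operators on the codes. -/
def IsBorelFunctor {LB LA : ℕ → ℕ} {B : Str LB} {A : Str LA} (F : IsoFunctor B A) : Prop :=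
  ∃ (Φ : ObjCode LB → ObjCode LA) (Ψ : ObjCode LB × (ℕ → ℕ) × ObjCode LB → (ℕ → ℕ)),
    Measurable Φ ∧ Measurable Ψ ∧
    (∀ M : Copy B, codeStr (F.obj M).1 = Φ (codeStr M.1)) ∧
    (∀ M N g hg, ⇑(F.map M N g hg) = Ψ (codeStr M.1, ⇑g, codeStr N.1))

/-- Natural isomorphism of functors `Iso(B) → Iso(A)` (Definition 1.9). -/
def NatIso {LB LA : ℕ → ℕ} {B : Str LB} {A : Str LA} (F G : IsoFunctor B A) : Prop :=
  ∃ η : Copy B → (ℕ ≃ ℕ),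
    (∀ M, IsIso (F.obj M).1 (G.obj M).1 (η M)) ∧
    (∀ (M N : Copy B) (g : ℕ ≃ ℕ) (hg : IsIso M.1 N.1 g),
      (η M).trans (G.map M N g hg) = (F.map M N g hg).trans (η N))

end Paper
namespace Paper
/-!
Each copy `M` of `B` gets a canonical isomorphism `σ_M : B → M`, and an isomorphism
`g : M → N` of copies is sent to `H (σ_N⁻¹ g σ_M)`, which is functorial for any choice of the
`σ_M`. Coding a permutation `g` by the interleaving of `g` and `g⁻¹` in Baire space, take `σ_M`
lexicographically least among the isomorphisms `B → M`. Those codes that are least in their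
coset `g · Aut(B)` form a closed set, on which transporting `B` along the coded permutation is
continuous and injective; by Lusin–Souslin its inverse `M ↦ σ_M` is Borel, and `σ_B = id`.
Likewise, `H` is continuous on the closed set of codes of automorphisms of `B`, so it extends to a
Borel map on Baire space, and the action on morphisms is Borel.
-/

open Function Set Filter Topology

theorem IsIso.symm {L : ℕ → ℕ} {M N : Str L} {g : ℕ ≃ ℕ} (h : IsIso M N g) :
    IsIso N M g.symm := fun i v => by
  simpa using (h i fun k => g.symm (v k)).symm

theorem IsIso.trans {L : ℕ → ℕ} {M N P : Str L} {g₁ g₂ : ℕ ≃ ℕ}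
    (h₁ : IsIso M N g₁) (h₂ : IsIso N P g₂) : IsIso M P (g₁.trans g₂) :=
  fun i v => (h₁ i v).trans (h₂ i _)

theorem IsIso.inv_mul_mem_aut {L : ℕ → ℕ} {B M : Str L} {g g' : Equiv.Perm ℕ}
    (h : IsIso B M g) (h' : IsIso B M g') : g⁻¹ * g' ∈ aut B :=
  h'.trans h.symm

theorem continuous_apply_of_discrete {X ι α : Type*} [TopologicalSpace X] [TopologicalSpace ι]
    [DiscreteTopology ι] [TopologicalSpace α] {F : X → ι → α} {k : X → ι}
    (hF : Continuous F) (hk : Continuous k) : Continuous fun x => F x (k x) :=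
  (continuous_prod_of_discrete_right (f := fun p : (ι → α) × ι => p.1 p.2) |>.2
    fun i => continuous_apply i).comp (hF.prodMk hk)

theorem measurable_apply_of_countable {X ι α : Type*} [MeasurableSpace X] [MeasurableSpace ι]
    [Countable ι] [MeasurableSingletonClass ι] [MeasurableSpace α] {F : X → ι → α} {k : X → ι}
    (hF : Measurable F) (hk : Measurable k) : Measurable fun x => F x (k x) :=
  (measurable_from_prod_countable_left (f := fun p : (ι → α) × ι => p.1 p.2)
    fun i => measurable_pi_apply i).comp (hF.prodMk hk)

section LexOrder

variable {α : Type*} [LinearOrder α]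

theorem exists_agree_forall_apply_le [WellFoundedLT α] {C : Set (ℕ → α)} {w : ℕ → α}
    (hw : w ∈ C) (n : ℕ) :
    ∃ z ∈ C, (∀ m < n, z m = w m) ∧ ∀ y ∈ C, (∀ m < n, y m = w m) → z n ≤ y n := by
  obtain ⟨_, ⟨z, hz, hzw, rfl⟩, hmin⟩ := wellFounded_lt.has_min
    {c | ∃ z ∈ C, (∀ m < n, z m = w m) ∧ z n = c} ⟨w n, w, hw, fun _ _ => rfl, rfl⟩
  exact ⟨z, hz, hzw, fun y hy hyw => not_lt.1 (hmin _ ⟨y, hy, hyw, rfl⟩)⟩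

/-- The leftmost branch: choosing each value as small as possible given the previous ones. -/
theorem _root_.IsClosed.exists_forall_toLex_le [WellFoundedLT α] [TopologicalSpace α]
    {C : Set (ℕ → α)} (hC : IsClosed C) (hne : C.Nonempty) :
    ∃ f ∈ C, ∀ z ∈ C, toLex f ≤ toLex z := by
  choose! next hnextC hnext_agree hnext_min using
    fun w (hw : w ∈ C) n => exists_agree_forall_apply_le hw n
  obtain ⟨w₀, hw₀⟩ := hne
  let s : ℕ → ℕ → α := fun n => Nat.rec w₀ (fun k w => next w k) n
  have hsC : ∀ n, s n ∈ C := by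
    intro n
    induction n with
    | zero => exact hw₀
    | succ n ih => exact hnextC _ ih n
  have hs_stable : ∀ n, ∀ m < n, s n m = s (m + 1) m := by
    intro n
    induction n with
    | zero => intro m hm; omega
    | succ n ih =>
      intro m hm
      rcases Nat.lt_succ_iff_lt_or_eq.1 hm with hm | rfl
      · exact (hnext_agree _ (hsC n) n m hm).trans (ih m hm)
      · rfl
  have hlim : Tendsto s atTop (𝓝 fun m => s (m + 1) m) :=
    tendsto_pi_nhds.2 fun m => tendsto_atTop_of_eventually_const fun n hn => hs_stable n m hn
  refine ⟨_, hC.mem_of_tendsto hlim (Eventually.of_forall hsC), fun z hz => not_lt.1 ?_⟩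
  rintro ⟨i, hagree, hlt⟩
  exact hlt.not_ge <| hnext_min _ (hsC i) i z hz fun m hm =>
    (hagree m hm).trans (hs_stable i m hm).symm

variable [TopologicalSpace α] [DiscreteTopology α]

theorem isOpen_setOf_toLex_lt : IsOpen {p : (ℕ → α) × (ℕ → α) | toLex p.1 < toLex p.2} := by
  have hcoord : ∀ (P : α → α → Prop) (j : ℕ),
      IsOpen {p : (ℕ → α) × (ℕ → α) | P (p.1 j) (p.2 j)} := fun P j =>
    (show Continuous fun p : (ℕ → α) × (ℕ → α) => (p.1 j, p.2 j) by fun_prop).isOpen_preimage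
      {q : α × α | P q.1 q.2} (isOpen_discrete _)
  have hunion : {p : (ℕ → α) × (ℕ → α) | toLex p.1 < toLex p.2} =
      ⋃ i, (⋂ j ∈ Iio i, {p | p.1 j = p.2 j}) ∩ {p | p.1 i < p.2 i} := by
    ext p
    simp only [mem_iUnion, mem_inter_iff, mem_iInter, mem_Iio, mem_ofPred_eq]
    rfl
  rw [hunion]
  exact isOpen_iUnion fun i =>
    ((finite_Iio i).isOpen_biInter fun j _ => hcoord (· = ·) j).inter (hcoord (· < ·) i)

theorem isClosed_setOf_toLex_le {X : Type*} [TopologicalSpace X] {f g : X → ℕ → α}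
    (hf : Continuous f) (hg : Continuous g) : IsClosed {x | toLex (f x) ≤ toLex (g x)} := by
  simp only [← isOpen_compl_iff, compl_ofPred, not_le]
  exact isOpen_setOf_toLex_lt.preimage (hg.prodMk hf)

end LexOrder

/-- A permutation `g` is coded by `g 0, g⁻¹ 0, g 1, g⁻¹ 1, …`: unlike `⇑g` alone, these codes
form a closed subset of Baire space. -/
def permCode (g : Equiv.Perm ℕ) (n : ℕ) : ℕ :=
  if n % 2 = 0 then g (n / 2) else g.symm (n / 2)

@[simp]
theorem permCode_two_mul (g : Equiv.Perm ℕ) (n : ℕ) : permCode g (2 * n) = g n := by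
  simp [permCode]

@[simp]
theorem permCode_two_mul_add_one (g : Equiv.Perm ℕ) (n : ℕ) :
    permCode g (2 * n + 1) = g.symm n := by
  rw [permCode, if_neg (by omega), show (2 * n + 1) / 2 = n by omega]

theorem permCode_injective : Injective permCode := fun g g' h =>
  Equiv.ext fun n => by simpa using congrFun h (2 * n)

theorem range_permCode :
    range permCode = {f | ∀ n, f (2 * f (2 * n) + 1) = n ∧ f (2 * f (2 * n + 1)) = n} := by
  ext f
  constructor
  · rintro ⟨g, rfl⟩ n
    simp
  · intro hf
    refine ⟨⟨fun n => f (2 * n), fun n => f (2 * n + 1), fun n => (hf n).1,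
      fun n => (hf n).2⟩, funext fun m => ?_⟩
    obtain ⟨k, rfl | rfl⟩ := Nat.even_or_odd' m <;> simp

theorem isClosed_range_permCode : IsClosed (range permCode) := by
  have hcont : ∀ (c : ℕ) (φ : ℕ → ℕ), Continuous fun f : ℕ → ℕ => f (φ (f c)) := fun c φ =>
    continuous_apply_of_discrete continuous_id
      (continuous_of_discreteTopology.comp (continuous_apply c))
  rw [range_permCode, ofPred_forall]
  exact isClosed_iInter fun n =>
    (isClosed_eq (hcont (2 * n) (2 * · + 1)) continuous_const).inter
      (isClosed_eq (hcont (2 * n + 1) (2 * ·)) continuous_const)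

theorem toLex_permCode_one_le (g : Equiv.Perm ℕ) : toLex (permCode 1) ≤ toLex (permCode g) := by
  refine not_lt.1 ?_
  rintro ⟨i, hagree, hlt⟩
  have hfix : ∀ k, 2 * k < i → g k = k := fun k hk => by simpa using hagree (2 * k) hk
  obtain ⟨m, rfl | rfl⟩ := Nat.even_or_odd' i
  · simp only [Pi.toLex_apply, permCode_two_mul, Equiv.Perm.one_apply] at hlt
    exact hlt.ne (g.injective (hfix _ (by omega)))
  · simp only [Pi.toLex_apply, permCode_two_mul_add_one] at hlt
    change g.symm m < m at hlt
    have := hfix _ (show 2 * g.symm m < 2 * m + 1 by omega)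
    rw [Equiv.apply_symm_apply] at this
    omega

/-- Right multiplication by `a` on codes, extended to all of Baire space. -/
def permCodeMulRight (a : Equiv.Perm ℕ) (f : ℕ → ℕ) (n : ℕ) : ℕ :=
  if n % 2 = 0 then f (2 * a (n / 2)) else a.symm (f n)

theorem permCodeMulRight_permCode (a g : Equiv.Perm ℕ) :
    permCodeMulRight a (permCode g) = permCode (g * a) := by
  funext n
  obtain ⟨k, rfl | rfl⟩ := Nat.even_or_odd' n
  · simp [permCodeMulRight]
  · rw [permCodeMulRight, if_neg (by omega)]
    simp [Equiv.Perm.mul_def]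

theorem continuous_permCodeMulRight (a : Equiv.Perm ℕ) : Continuous (permCodeMulRight a) := by
  refine continuous_pi fun n => ?_
  by_cases h : n % 2 = 0
  · simpa only [permCodeMulRight, if_pos h] using continuous_apply (2 * a (n / 2))
  · simp only [permCodeMulRight, if_neg h]
    exact continuous_of_discreteTopology.comp (continuous_apply n)

def forwardPart (f : ℕ → ℕ) (n : ℕ) : ℕ := f (2 * n)

theorem forwardPart_permCode (g : Equiv.Perm ℕ) : forwardPart (permCode g) = ⇑g :=
  funext (permCode_two_mul g)

theorem continuous_forwardPart : Continuous forwardPart :=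
  continuous_pi fun n => continuous_apply (2 * n)

theorem injOn_forwardPart : InjOn forwardPart (range permCode) := by
  rintro _ ⟨g, rfl⟩ _ ⟨g', rfl⟩ h
  rw [forwardPart_permCode, forwardPart_permCode] at h
  rw [DFunLike.coe_injective h]

section Selection

variable {LB : ℕ → ℕ} (B : Str LB)

/-- The code of the copy of `B` transported along the permutation coded by `f`, whose inverse
sits at the odd places. -/
def transportCode (f : ℕ → ℕ) : ObjCode LB := fun p => B.rel p.1 fun k => f (2 * p.2 k + 1)

theorem continuous_transportCode : Continuous (transportCode B) :=
  continuous_pi fun _ =>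
    continuous_of_discreteTopology.comp (continuous_pi fun _ => continuous_apply _)

theorem transportCode_permCode_eq_codeStr_iff {M : Str LB} {g : Equiv.Perm ℕ} :
    transportCode B (permCode g) = codeStr M ↔ IsIso B M g := by
  constructor
  · intro h i v
    simpa [transportCode, codeStr] using congrFun h ⟨i, fun k => g (v k)⟩
  · intro h
    funext ⟨i, w⟩
    simpa [transportCode, codeStr] using h i fun k => g.symm (w k)

def isoCodes (M : Str LB) : Set (ℕ → ℕ) := permCode '' {g | IsIso B M g}

theorem isClosed_isoCodes (M : Str LB) : IsClosed (isoCodes B M) := by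
  have : isoCodes B M = range permCode ∩ transportCode B ⁻¹' {codeStr M} := by
    ext f
    constructor
    · rintro ⟨g, hg, rfl⟩
      exact ⟨mem_range_self g, (transportCode_permCode_eq_codeStr_iff B).2 hg⟩
    · rintro ⟨⟨g, rfl⟩, hg⟩
      exact ⟨g, (transportCode_permCode_eq_codeStr_iff B).1 hg, rfl⟩
  rw [this]
  exact isClosed_range_permCode.inter (isClosed_singleton.preimage (continuous_transportCode B))

def leastIsos : Set (ℕ → ℕ) :=
  permCode '' {g | ∀ a ∈ aut B, toLex (permCode g) ≤ toLex (permCode (g * a))}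

theorem isClosed_leastIsos : IsClosed (leastIsos B) := by
  have : leastIsos B =
      range permCode ∩ ⋂ a ∈ aut B, {f | toLex f ≤ toLex (permCodeMulRight a f)} := by
    ext f
    constructor
    · rintro ⟨g, hg, rfl⟩
      refine ⟨mem_range_self g, mem_iInter₂.2 fun a ha => ?_⟩
      simpa [permCodeMulRight_permCode] using hg a ha
    · rintro ⟨⟨g, rfl⟩, h⟩
      refine ⟨g, fun a ha => ?_, rfl⟩
      simpa [permCodeMulRight_permCode] using mem_iInter₂.1 h a ha
  rw [this]
  exact isClosed_range_permCode.inter <| isClosed_biInter fun a _ =>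
    isClosed_setOf_toLex_le continuous_id (continuous_permCodeMulRight a)

theorem injOn_transportCode_leastIsos : InjOn (transportCode B) (leastIsos B) := by
  rintro _ ⟨g, hg, rfl⟩ _ ⟨g', hg', rfl⟩ h
  let M : Str LB := ⟨fun i v => transportCode B (permCode g) ⟨i, v⟩⟩
  have hM : IsIso B M g := (transportCode_permCode_eq_codeStr_iff B).1 rfl
  have hM' : IsIso B M g' := (transportCode_permCode_eq_codeStr_iff B).1 h.symm
  have ha := hM.inv_mul_mem_aut hM'
  refine toLex.injective (le_antisymm ?_ ?_)
  · simpa using hg _ ha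
  · simpa using hg' _ (inv_mem ha)

theorem exists_isIso_permCode_mem_leastIsos (M : Copy B) :
    ∃ g, IsIso B M.1 g ∧ permCode g ∈ leastIsos B := by
  obtain ⟨e, he⟩ := M.2
  obtain ⟨_, ⟨g, hg, rfl⟩, hmin⟩ :=
    (isClosed_isoCodes B M.1).exists_forall_toLex_le ⟨_, e.symm, he.symm, rfl⟩
  exact ⟨g, hg, g, fun a ha => hmin _ ⟨g * a, (mem_aut ha).trans hg, rfl⟩, rfl⟩

theorem permCode_one_mem_leastIsos : permCode 1 ∈ leastIsos B :=
  ⟨1, fun _ _ => toLex_permCode_one_le _, rfl⟩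

/-- Sends the code of a copy `M` of `B` to the code of the least isomorphism `B → M`. -/
noncomputable def isoSelector : ObjCode LB → ℕ → ℕ :=
  extend ((leastIsos B).domRestrict (transportCode B)) Subtype.val 0

theorem measurable_isoSelector : Measurable (isoSelector B) := by
  have := (isClosed_leastIsos B).polishSpace
  exact ((continuous_transportCode B).comp continuous_subtype_val |>.measurableEmbedding
    (injOn_transportCode_leastIsos B).injective).measurable_extend
    measurable_subtype_coe measurable_const

theorem isoSelector_transportCode {f : ℕ → ℕ} (hf : f ∈ leastIsos B) :
    isoSelector B (transportCode B f) = f :=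
  (injOn_transportCode_leastIsos B).injective.extend_apply _ _ ⟨f, hf⟩

theorem exists_isoSelector_codeStr_eq (M : Copy B) :
    ∃ g, IsIso B M.1 g ∧ isoSelector B (codeStr M.1) = permCode g := by
  obtain ⟨g, hg, hleast⟩ := exists_isIso_permCode_mem_leastIsos B M
  refine ⟨g, hg, ?_⟩
  rw [← (transportCode_permCode_eq_codeStr_iff B).2 hg, isoSelector_transportCode B hleast]

noncomputable def canonIso (M : Copy B) : Equiv.Perm ℕ :=
  (exists_isoSelector_codeStr_eq B M).choose

theorem canonIso_isIso (M : Copy B) : IsIso B M.1 (canonIso B M) :=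
  (exists_isoSelector_codeStr_eq B M).choose_spec.1

theorem isoSelector_codeStr (M : Copy B) :
    isoSelector B (codeStr M.1) = permCode (canonIso B M) :=
  (exists_isoSelector_codeStr_eq B M).choose_spec.2

theorem canonIso_selfCopy : canonIso B (selfCopy B) = 1 := by
  refine permCode_injective ?_
  rw [← isoSelector_codeStr]
  show isoSelector B (codeStr B) = permCode 1
  rw [← (transportCode_permCode_eq_codeStr_iff B (g := 1)).2 (isIso_refl B),
    isoSelector_transportCode B (permCode_one_mem_leastIsos B)]

noncomputable def transfer (M N : Copy B) (g : ℕ ≃ ℕ) : Equiv.Perm ℕ :=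
  (canonIso B M).trans (g.trans (canonIso B N).symm)

theorem transfer_mem_aut {M N : Copy B} {g : ℕ ≃ ℕ} (hg : IsIso M.1 N.1 g) :
    transfer B M N g ∈ aut B :=
  (canonIso_isIso B M).trans (hg.trans (canonIso_isIso B N).symm)

theorem transfer_refl (M : Copy B) : transfer B M M (Equiv.refl ℕ) = 1 := by
  ext
  simp [transfer]

theorem transfer_trans (M N P : Copy B) (g₁ g₂ : ℕ ≃ ℕ) :
    transfer B M P (g₁.trans g₂) = transfer B N P g₂ * transfer B M N g₁ := by
  ext
  simp [transfer]

theorem transfer_selfCopy (g : ℕ ≃ ℕ) : transfer B (selfCopy B) (selfCopy B) g = g := by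
  ext
  simp [transfer, canonIso_selfCopy, Equiv.Perm.one_def]

noncomputable def transferCode (q : ObjCode LB × (ℕ → ℕ) × ObjCode LB) (n : ℕ) : ℕ :=
  isoSelector B q.2.2 (2 * q.2.1 (isoSelector B q.1 (2 * n)) + 1)

theorem transferCode_codeStr (M N : Copy B) (g : ℕ ≃ ℕ) :
    transferCode B (codeStr M.1, ⇑g, codeStr N.1) = ⇑(transfer B M N g) := by
  funext n
  simp only [transferCode, isoSelector_codeStr, permCode_two_mul, permCode_two_mul_add_one]
  rfl

theorem measurable_transferCode : Measurable (transferCode B) := by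
  have hsel := measurable_isoSelector B
  refine measurable_pi_lambda _ fun n => ?_
  refine measurable_apply_of_countable
    (F := fun q : ObjCode LB × (ℕ → ℕ) × ObjCode LB => isoSelector B q.2.2)
    (hsel.comp (measurable_snd.comp measurable_snd)) ((measurable_of_countable (2 * · + 1)).comp ?_)
  exact measurable_apply_of_countable (measurable_fst.comp measurable_snd)
    ((hsel.comp measurable_fst).eval (a := 2 * n))

end Selection

section Extension

variable {LA LB : ℕ → ℕ} {A : Str LA} {B : Str LB}

noncomputable def autOfCode (f : isoCodes B B) : aut B :=
  ⟨f.2.choose, f.2.choose_spec.1⟩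

theorem permCode_autOfCode (f : isoCodes B B) : permCode (autOfCode f : Equiv.Perm ℕ) = f :=
  f.2.choose_spec.2

theorem continuous_autOfCode : Continuous (autOfCode (B := B)) := by
  refine continuous_induced_rng.2 (continuous_induced_rng.2 ?_)
  refine (continuous_forwardPart.comp continuous_subtype_val).congr fun f => ?_
  change forwardPart f.1 = ⇑(autOfCode f : Equiv.Perm ℕ)
  rw [← permCode_autOfCode f, forwardPart_permCode]

noncomputable def extendHom (H : aut B →* aut A) : (ℕ → ℕ) → ℕ → ℕ :=
  extend ((isoCodes B B).domRestrict forwardPart) (fun f => ⇑(H (autOfCode f) : Equiv.Perm ℕ)) 0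

theorem injective_domRestrict_forwardPart :
    Injective ((isoCodes B B).domRestrict forwardPart) :=
  (injOn_forwardPart.mono (image_subset_range _ _)).injective

theorem measurable_extendHom (H : aut B →* aut A)
    (hcont : Continuous fun g : aut B => ((H g : Equiv.Perm ℕ) : ℕ → ℕ)) :
    Measurable (extendHom H) := by
  have := (isClosed_isoCodes B B).polishSpace
  exact ((continuous_forwardPart.comp continuous_subtype_val).measurableEmbedding
    injective_domRestrict_forwardPart).measurable_extend
    (hcont.comp continuous_autOfCode).measurable measurable_const

theorem extendHom_coe (H : aut B →* aut A) (a : aut B) :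
    extendHom H ⇑(a : Equiv.Perm ℕ) = ⇑(H a : Equiv.Perm ℕ) := by
  have ha : permCode a ∈ isoCodes B B := ⟨a, a.2, rfl⟩
  have hcode : autOfCode ⟨_, ha⟩ = a := Subtype.ext (permCode_injective (permCode_autOfCode _))
  calc extendHom H ⇑(a : Equiv.Perm ℕ)
      = extendHom H ((isoCodes B B).domRestrict forwardPart ⟨_, ha⟩) := by
        rw [domRestrict_apply, forwardPart_permCode]
    _ = ⇑(H a : Equiv.Perm ℕ) := by
        rw [extendHom, injective_domRestrict_forwardPart.extend_apply, hcode]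

end Extension

variable {LA LB : ℕ → ℕ} {A : Str LA} {B : Str LB}

noncomputable def functorOfHom (H : aut B →* aut A) : IsoFunctor B A where
  obj _ := selfCopy A
  map M N g hg := H ⟨transfer B M N g, transfer_mem_aut B hg⟩
  map_iso _ _ _ _ := (H _).2
  map_id M h := by
    rw [show (⟨_, transfer_mem_aut B h⟩ : aut B) = 1 from Subtype.ext (transfer_refl B M),
      map_one]
    rfl
  map_comp M N P g₁ h₁ g₂ h₂ h₃ := by
    rw [show (⟨_, transfer_mem_aut B h₃⟩ : aut B) =
        ⟨_, transfer_mem_aut B h₂⟩ * ⟨_, transfer_mem_aut B h₁⟩ from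
      Subtype.ext (transfer_trans B M N P g₁ g₂), map_mul]
    rfl

theorem isBorelFunctor_functorOfHom (H : aut B →* aut A)
    (hcont : Continuous fun g : aut B => ((H g : Equiv.Perm ℕ) : ℕ → ℕ)) :
    IsBorelFunctor (functorOfHom H) := by
  refine ⟨fun _ => codeStr A, extendHom H ∘ transferCode B, measurable_const,
    (measurable_extendHom H hcont).comp (measurable_transferCode B), fun _ => rfl,
    fun M N g hg => ?_⟩
  rw [comp_apply, transferCode_codeStr]
  exact (extendHom_coe H ⟨_, transfer_mem_aut B hg⟩).symm

theorem functorOfHom_map_selfCopy (H : aut B →* aut A) (g : aut B) :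
    (functorOfHom H).map (selfCopy B) (selfCopy B) g (mem_aut g.2) = H g := by
  change ((H ⟨_, transfer_mem_aut B (mem_aut g.2)⟩ : aut A) : Equiv.Perm ℕ) = H g
  rw [show (⟨_, transfer_mem_aut B (mem_aut g.2)⟩ : aut B) = g from
    Subtype.ext (transfer_selfCopy B g)]

/-- **Theorem 2.1.** For every continuous homomorphism `H : Aut(B) → Aut(A)`, there
is a Borel functor `G : Iso(B) → Iso(A)` with `G(B) = A` whose restriction to
`Aut(B)` (the morphisms from `B` to itself) is `H`. -/
theorem homo_to_functor (LA LB : ℕ → ℕ) (A : Str LA) (B : Str LB)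
    (H : ↥(aut B) →* ↥(aut A))
    (hcont : Continuous fun g : ↥(aut B) => ((H g : Equiv.Perm ℕ) : ℕ → ℕ)) :
    ∃ G : IsoFunctor B A, IsBorelFunctor G ∧ (G.obj (selfCopy B)).1 = A ∧
      ∀ g : ↥(aut B),
        G.map (selfCopy B) (selfCopy B) (g : Equiv.Perm ℕ) (mem_aut g.2) =
          (H g : Equiv.Perm ℕ) :=
  ⟨functorOfHom H, isBorelFunctor_functorOfHom H hcont, rfl, functorOfHom_map_selfCopy H⟩

end Paper
end
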